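/- arXiv:2108.10195 — 3 statements merged into one kernel-verified Lean document; each statement's English description precedes it below -/
import Mathlib

section
/- Let ζ be a non-bounding r-cycle of K and let S be a set of r-simplices of K. Then ζ does not lie in the Z/2-linear span of the set consisting of all r-cycles of K_S (regarded as r-chains of K) together with the boundaries ∂_{r+1}σ of all (r+1)-simplices σ of K, if and only if S intersects every r-cycle of K homologous to ζ. -/
namespace ArxivCut

noncomputable section

attribute [local instance] Classical.propDecidable

open Finset

variable {V : Type*} [Fintype V] [DecidableEq V]

/-- A finite abstract simplicial complex on the vertex type `V`. -/
structure SComplex (V : Type*) [DecidableEq V] where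
  faces : Finset (Finset V)
  nonempty_mem : ∀ s ∈ faces, s.Nonempty
  down_closed : ∀ s ∈ faces, ∀ t ⊆ s, t.Nonempty → t ∈ faces

/-- The boundary of a `𝔽₂`-chain (a chain is identified with its set of simplices):
a simplex `τ` lies in the boundary iff it is a facet of an odd number of members. -/
def bdry (c : Finset (Finset V)) : Finset (Finset V) :=
  Finset.univ.filter fun τ => Odd ((c.filter fun σ => τ ⊆ σ ∧ τ.card + 1 = σ.card)).card

/-- `c` is an `r`-chain of `K` (a set of `r`-simplices of `K`). -/
def IsRChain (K : SComplex V) (r : ℕ) (c : Finset (Finset V)) : Prop :=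
  ∀ σ ∈ c, σ ∈ K.faces ∧ σ.card = r + 1

/-- `c` is an `r`-cycle of `K`. -/
def IsRCycle (K : SComplex V) (r : ℕ) (c : Finset (Finset V)) : Prop :=
  IsRChain K r c ∧ bdry c = ∅

/-- `z` is a bounding `r`-cycle of `K`: it is the boundary of an `(r+1)`-chain of `K`. -/
def IsBounding (K : SComplex V) (r : ℕ) (z : Finset (Finset V)) : Prop :=
  ∃ b, IsRChain K (r + 1) b ∧ bdry b = z

/-- Two `r`-chains are homologous in `K` if their `𝔽₂`-sum (symmetric difference) bounds. -/
def Homologous (K : SComplex V) (r : ℕ) (a b : Finset (Finset V)) : Prop :=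
  IsBounding K r (symmDiff a b)

/-- The subcomplex obtained from `K` by deleting the simplices of `S` together with all
their cofaces. -/
def SComplex.del (K : SComplex V) (S : Finset (Finset V)) : SComplex V where
  faces := K.faces.filter fun σ => ∀ s ∈ S, ¬ s ⊆ σ
  nonempty_mem := fun s hs => K.nonempty_mem s (Finset.mem_filter.mp hs).1
  down_closed := by
    intro s hs t hts htne
    rw [Finset.mem_filter] at hs ⊢
    exact ⟨K.down_closed s hs.1 t hts htne, fun u hu hut => hs.2 u hu (hut.trans hts)⟩

/-- The `𝔽₂`-sum of a (finite) set of chains. -/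
def chainSum (F : Finset (Finset (Finset V))) : Finset (Finset V) :=
  Finset.univ.filter fun σ => Odd ((F.filter fun c => σ ∈ c).card)

/-- `z` lies in the `𝔽₂`-linear span of the chains satisfying `P`. -/
def InSpan (P : Finset (Finset V) → Prop) (z : Finset (Finset V)) : Prop :=
  ∃ F : Finset (Finset (Finset V)), (∀ c ∈ F, P c) ∧ chainSum F = z

/-!
The span in question is `Z_r(K_S) + B_r(K)`. If a cycle `ρ` homologous to `ζ` avoids `S`, it
is a cycle of `K_S` (the members of `S` are `r`-simplices, so the only way an `r`-simplex of `ρ`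
can be a coface of one is to be equal to it), and `ζ = ρ + (ρ + ζ)` lies in the span.
Conversely, write `ζ = x + y` with `x ∈ Z_r(K_S)` and `y ∈ B_r(K)`: then `x` is a cycle of `K`
homologous to `ζ` that avoids `S`.
-/

open scoped symmDiff

section Parity

variable {α β : Type*} [DecidableEq α]

lemma odd_card_symmDiff (s t : Finset α) : Odd #(s ∆ t) ↔ ¬(Odd #s ↔ Odd #t) := by
  have hst : #(s ∆ t) = #(s \ t) + #(t \ s) :=
    card_union_of_disjoint disjoint_sdiff_sdiff
  have hs := card_sdiff_add_card_inter s t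
  have ht := card_sdiff_add_card_inter t s
  rw [inter_comm] at ht
  rw [hst, ← hs, ← ht, Nat.odd_add, Nat.odd_add, Nat.odd_add]
  simp only [← Nat.not_odd_iff_even]
  tauto

lemma filter_symmDiff_eq (p : α → Prop) [DecidablePred p] (s t : Finset α) :
    (s ∆ t).filter p = s.filter p ∆ t.filter p := by
  ext a
  simp only [mem_filter, mem_symmDiff]
  tauto

lemma filter_odd_card_filter_symmDiff [Fintype β] [DecidableEq β] (R : β → α → Prop)
    [∀ x, DecidablePred (R x)] (s t : Finset α) :
    univ.filter (fun x => Odd #((s ∆ t).filter (R x))) =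
      univ.filter (fun x => Odd #(s.filter (R x))) ∆
        univ.filter (fun x => Odd #(t.filter (R x))) := by
  ext x
  simp only [mem_filter, mem_univ, true_and, mem_symmDiff, filter_symmDiff_eq,
    odd_card_symmDiff]
  tauto

end Parity

lemma bdry_symmDiff (a b : Finset (Finset V)) : bdry (a ∆ b) = bdry a ∆ bdry b :=
  filter_odd_card_filter_symmDiff _ a b

lemma bdry_empty : bdry (∅ : Finset (Finset V)) = ∅ := by
  simp [bdry]

lemma chainSum_symmDiff (F G : Finset (Finset (Finset V))) :
    chainSum (F ∆ G) = chainSum F ∆ chainSum G :=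
  filter_odd_card_filter_symmDiff _ F G

lemma chainSum_empty : chainSum (∅ : Finset (Finset (Finset V))) = ∅ := by
  simp [chainSum]

lemma chainSum_singleton (c : Finset (Finset V)) : chainSum {c} = c := by
  ext σ
  by_cases h : σ ∈ c <;> simp [chainSum, filter_singleton, h]

section Span

variable {P Q : Finset (Finset V) → Prop} {z : Finset (Finset V)}

lemma inSpan_empty : InSpan P ∅ :=
  ⟨∅, by simp, chainSum_empty⟩

lemma inSpan_of_prop {c : Finset (Finset V)} (h : P c) : InSpan P c :=
  ⟨{c}, by simpa using h, chainSum_singleton c⟩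

lemma InSpan.symmDiff {a b : Finset (Finset V)} (ha : InSpan P a) (hb : InSpan P b) :
    InSpan P (a ∆ b) := by
  obtain ⟨F, hF, rfl⟩ := ha
  obtain ⟨G, hG, rfl⟩ := hb
  refine ⟨F ∆ G, fun c hc => ?_, chainSum_symmDiff F G⟩
  rcases mem_symmDiff.1 hc with ⟨hc, -⟩ | ⟨hc, -⟩
  exacts [hF c hc, hG c hc]

lemma InSpan.mono (h : ∀ c, P c → Q c) (hz : InSpan P z) : InSpan Q z := by
  obtain ⟨F, hF, rfl⟩ := hz
  exact ⟨F, fun c hc => h c (hF c hc), rfl⟩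

lemma InSpan.induction (h0 : Q ∅) (hadd : ∀ c a, P c → Q a → Q (c ∆ a))
    (hz : InSpan P z) : Q z := by
  obtain ⟨F, hF, rfl⟩ := hz
  induction F using Finset.induction_on with
  | empty => rwa [chainSum_empty]
  | insert c F hcF ih =>
    have hins : insert c F = {c} ∆ F := by
      rw [symmDiff_eq_union (disjoint_singleton_left.2 hcF), insert_eq]
    rw [hins, chainSum_symmDiff, chainSum_singleton]
    exact hadd c _ (hF c (mem_insert_self c F)) (ih fun d hd => hF d (mem_insert_of_mem hd))

lemma InSpan.exists_symmDiff_of_or (hz : InSpan (fun c => P c ∨ Q c) z) :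
    ∃ x y, InSpan P x ∧ InSpan Q y ∧ x ∆ y = z := by
  refine hz.induction (Q := fun z => ∃ x y, InSpan P x ∧ InSpan Q y ∧ x ∆ y = z)
    ⟨∅, ∅, inSpan_empty, inSpan_empty, symmDiff_self ∅⟩ ?_
  rintro c _ (hc | hc) ⟨x, y, hx, hy, rfl⟩
  · exact ⟨c ∆ x, y, (inSpan_of_prop hc).symmDiff hx, hy, symmDiff_assoc c x y⟩
  · exact ⟨x, c ∆ y, hx, (inSpan_of_prop hc).symmDiff hy, (symmDiff_left_comm c x y).symm⟩

end Span

section Homology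

variable {K : SComplex V} {r : ℕ}

omit [Fintype V] in
lemma IsRChain.symmDiff {a b : Finset (Finset V)} (ha : IsRChain K r a) (hb : IsRChain K r b) :
    IsRChain K r (a ∆ b) := by
  intro σ hσ
  rcases mem_symmDiff.1 hσ with ⟨hσ, -⟩ | ⟨hσ, -⟩
  exacts [ha σ hσ, hb σ hσ]

lemma IsRCycle.symmDiff {a b : Finset (Finset V)} (ha : IsRCycle K r a) (hb : IsRCycle K r b) :
    IsRCycle K r (a ∆ b) :=
  ⟨ha.1.symmDiff hb.1, by rw [bdry_symmDiff, ha.2, hb.2, symmDiff_self, bot_eq_empty]⟩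

lemma isRCycle_of_inSpan {z : Finset (Finset V)} (hz : InSpan (IsRCycle K r) z) :
    IsRCycle K r z :=
  hz.induction ⟨fun _ h => absurd h (notMem_empty _), bdry_empty⟩ fun _ _ hc ha => hc.symmDiff ha

lemma IsBounding.symmDiff {a b : Finset (Finset V)} (ha : IsBounding K r a)
    (hb : IsBounding K r b) : IsBounding K r (a ∆ b) := by
  obtain ⟨u, hu, rfl⟩ := ha
  obtain ⟨v, hv, rfl⟩ := hb
  exact ⟨u ∆ v, hu.symmDiff hv, bdry_symmDiff u v⟩

lemma inSpan_bdry_iff_isBounding {z : Finset (Finset V)} :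
    InSpan (fun c => ∃ σ ∈ K.faces, σ.card = r + 2 ∧ c = bdry {σ}) z ↔ IsBounding K r z := by
  constructor
  · refine InSpan.induction ⟨∅, fun _ h => absurd h (notMem_empty _), bdry_empty⟩ ?_
    rintro _ a ⟨σ, hσK, hσcard, rfl⟩ ha
    refine IsBounding.symmDiff ⟨{σ}, fun τ hτ => ?_, rfl⟩ ha
    rw [mem_singleton.1 hτ]
    exact ⟨hσK, hσcard⟩
  · rintro ⟨b, hb, rfl⟩
    induction b using Finset.induction_on with
    | empty => rw [bdry_empty]; exact inSpan_empty
    | insert σ b hσb ih =>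
      rw [insert_eq, ← symmDiff_eq_union (disjoint_singleton_left.2 hσb), bdry_symmDiff]
      exact (inSpan_of_prop ⟨σ, (hb σ (mem_insert_self σ b)).1,
        (hb σ (mem_insert_self σ b)).2, rfl⟩).symmDiff
        (ih fun τ hτ => hb τ (mem_insert_of_mem hτ))

lemma isRChain_del_iff {S c : Finset (Finset V)} (hS : ∀ s ∈ S, s.card = r + 1) :
    IsRChain (K.del S) r c ↔ IsRChain K r c ∧ Disjoint S c := by
  simp only [IsRChain, SComplex.del, mem_filter, disjoint_right]
  constructor
  · intro h
    exact ⟨fun σ hσ => ⟨(h σ hσ).1.1, (h σ hσ).2⟩,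
      fun σ hσ hσS => (h σ hσ).1.2 σ hσS subset_rfl⟩
  · rintro ⟨hc, hcS⟩ σ hσ
    refine ⟨⟨(hc σ hσ).1, fun s hs hsσ => hcS hσ ?_⟩, (hc σ hσ).2⟩
    rwa [← eq_of_subset_of_card_le hsσ (by rw [(hc σ hσ).2, hS s hs])]

lemma isRCycle_del_iff {S c : Finset (Finset V)} (hS : ∀ s ∈ S, s.card = r + 1) :
    IsRCycle (K.del S) r c ↔ IsRCycle K r c ∧ Disjoint S c := by
  rw [IsRCycle, IsRCycle, isRChain_del_iff hS]
  tauto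

end Homology

theorem statement0_general (K : SComplex V) (r : ℕ)
    (ζ : Finset (Finset V))
    (S : Finset (Finset V)) (hS : ∀ s ∈ S, s ∈ K.faces ∧ s.card = r + 1) :
    (¬ InSpan (fun c =>
        IsRCycle (K.del S) r c ∨ ∃ σ ∈ K.faces, σ.card = r + 2 ∧ c = bdry {σ}) ζ)
      ↔ ∀ ρ, IsRCycle K r ρ → Homologous K r ρ ζ → ∃ s ∈ S, s ∈ ρ := by
  have hScard : ∀ s ∈ S, s.card = r + 1 := fun s hs => (hS s hs).2
  constructor
  · intro hζ ρ hρ hρζ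
    by_contra hmiss
    have hρS : IsRCycle (K.del S) r ρ :=
      (isRCycle_del_iff hScard).2 ⟨hρ, disjoint_left.2 fun s hs hsρ => hmiss ⟨s, hs, hsρ⟩⟩
    apply hζ
    rw [← symmDiff_symmDiff_cancel_left ρ ζ]
    exact (inSpan_of_prop (Or.inl hρS)).symmDiff
      ((inSpan_bdry_iff_isBounding.2 hρζ).mono fun _ => Or.inr)
  · rintro hhit hζ
    obtain ⟨x, y, hx, hy, rfl⟩ := hζ.exists_symmDiff_of_or
    obtain ⟨hxK, hxS⟩ := (isRCycle_del_iff hScard).1 (isRCycle_of_inSpan hx)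
    have hxζ : Homologous K r x (x ∆ y) := by
      rw [Homologous, symmDiff_symmDiff_cancel_left]
      exact inSpan_bdry_iff_isBounding.1 hy
    obtain ⟨s, hs, hsx⟩ := hhit x hxK hxζ
    exact disjoint_left.1 hxS hs hsx

/-- Let `ζ` be a non-bounding `r`-cycle of the `d`-dimensional complex `K`
and `S` a set of `r`-simplices of `K`.  Then `ζ` does not lie in the `𝔽₂`-linear span of the
set consisting of all `r`-cycles of `K_S` (regarded as `r`-chains of `K`) together with the
boundaries `∂σ` of all `(r+1)`-simplices `σ` of `K`, if and only if `S` intersects every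
`r`-cycle of `K` homologous to `ζ`. -/
theorem statement0 (K : SComplex V) (d r : ℕ)
    (hdim : ∀ s ∈ K.faces, s.card ≤ d + 1) (hr : r < d)
    (ζ : Finset (Finset V)) (hζcyc : IsRCycle K r ζ) (hζnb : ¬ IsBounding K r ζ)
    (S : Finset (Finset V)) (hS : ∀ s ∈ S, s ∈ K.faces ∧ s.card = r + 1) :
    (¬ InSpan (fun c =>
        IsRCycle (K.del S) r c ∨ ∃ σ ∈ K.faces, σ.card = r + 2 ∧ c = bdry {σ}) ζ)
      ↔ ∀ ρ, IsRCycle K r ρ → Homologous K r ρ ζ → ∃ s ∈ S, s ∈ ρ :=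
  statement0_general K r ζ S hS

end

end ArxivCut
end

section
/- Let ζ be a non-bounding 1-cycle of K. Then no trivial cocycle is a minimal solution set for ζ; that is, if η = δ(S) is the coboundary of a set S of vertices, then η is not an inclusion-minimal set of edges intersecting every cycle homologous to ζ. -/
namespace ArxivCut

noncomputable section

attribute [local instance] Classical.propDecidable

open Finset

variable {V : Type*} [Fintype V] [DecidableEq V]

/-- `e` is an edge (1-simplex) of `K`. -/
def IsEdge (K : SComplex V) (e : Finset V) : Prop := e ∈ K.faces ∧ e.card = 2

/-- `t` is a triangle (2-simplex) of `K`. -/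
def IsTri (K : SComplex V) (t : Finset V) : Prop := t ∈ K.faces ∧ t.card = 3

/-- The 1-skeleton of `K`, as a simple graph on the vertex type. -/
def skeleton (K : SComplex V) : SimpleGraph V where
  Adj u w := u ≠ w ∧ ({u, w} : Finset V) ∈ K.faces
  symm := by
    constructor
    intro u w h
    refine ⟨h.1.symm, ?_⟩
    rw [Finset.pair_comm]
    exact h.2
  loopless := by constructor; intro v h; exact h.1 rfl

/-- `K` is a triangulation of a closed surface: a finite connected 2-dimensional
simplicial complex in which every edge is contained in exactly two triangles and the link
of every vertex is a single cycle (equivalently, the triangles around each vertex are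
connected through edges containing that vertex). -/
structure IsClosedSurface (K : SComplex V) : Prop where
  vert_mem : ∀ v : V, ({v} : Finset V) ∈ K.faces
  dim_le : ∀ s ∈ K.faces, s.card ≤ 3
  pure2 : ∀ s ∈ K.faces, ∃ t, IsTri K t ∧ s ⊆ t
  edge_in_two_tri : ∀ e, IsEdge K e →
    (Finset.univ.filter fun t => IsTri K t ∧ e ⊆ t).card = 2
  conn : (skeleton K).Connected
  link_single_cycle : ∀ v : V, ∀ t₁ t₂, IsTri K t₁ → IsTri K t₂ → v ∈ t₁ → v ∈ t₂ →
    Relation.ReflTransGen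
      (fun a b => IsTri K a ∧ IsTri K b ∧ v ∈ a ∧ v ∈ b ∧ (a ∩ b).card = 2) t₁ t₂

/-- `c` is a 1-cycle of `K`: a set of edges of `K` meeting every vertex in an even number
of edges. -/
def IsOneCycle (K : SComplex V) (c : Finset (Finset V)) : Prop :=
  (∀ e ∈ c, IsEdge K e) ∧ ∀ v : V, Even ((c.filter fun e => v ∈ e).card)

/-- `z` is a sum of boundaries of triangles of `K`. -/
def IsBounding1 (K : SComplex V) (z : Finset (Finset V)) : Prop :=
  ∃ T : Finset (Finset V), (∀ t ∈ T, IsTri K t) ∧ bdry T = z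

/-- Two 1-chains are homologous: their sum (symmetric difference) is a sum of triangle
boundaries. -/
def Homol1 (K : SComplex V) (a b : Finset (Finset V)) : Prop :=
  IsBounding1 K (symmDiff a b)

/-- `η` is a 1-cocycle of `K`: a set of edges of `K` such that every triangle of `K`
contains an even number of edges of `η`. -/
def IsCocycle (K : SComplex V) (η : Finset (Finset V)) : Prop :=
  (∀ e ∈ η, IsEdge K e) ∧ ∀ t, IsTri K t → Even ((η.filter fun e => e ⊆ t).card)

/-- The dual edges corresponding to the edge set `F` : two distinct triangles of `K` are
related if they share an edge belonging to `F`. -/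
def DualStep (K : SComplex V) (F : Finset (Finset V)) (t₁ t₂ : Finset V) : Prop :=
  t₁ ≠ t₂ ∧ IsTri K t₁ ∧ IsTri K t₂ ∧ ∃ e ∈ F, e ⊆ t₁ ∧ e ⊆ t₂

/-- A triangle incident to the edge set `F` (a node of the subgraph of the dual graph
induced by the dual edges corresponding to `F`). -/
def Incident (K : SComplex V) (F : Finset (Finset V)) (t : Finset V) : Prop :=
  IsTri K t ∧ ∃ e ∈ F, e ⊆ t

/-- The subgraph of the dual graph `D_K` induced by the dual edges corresponding to the
edge set `F` is connected. -/
def DualConnected (K : SComplex V) (F : Finset (Finset V)) : Prop :=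
  ∀ t₁ t₂, Incident K F t₁ → Incident K F t₂ →
    Relation.ReflTransGen (DualStep K F) t₁ t₂

/-- `S` is a feasible set for the 1-cycle `ζ`: it intersects every cycle homologous
to `ζ`. -/
def Feasible (K : SComplex V) (ζ S : Finset (Finset V)) : Prop :=
  ∀ γ, IsOneCycle K γ → Homol1 K γ ζ → (γ ∩ S).Nonempty

/-- The coboundary `δ(A)` of a set `A` of vertices: the set of edges of `K` with exactly
one endpoint in `A`. -/
def cobdryV (K : SComplex V) (A : Finset V) : Finset (Finset V) :=
  Finset.univ.filter fun e => IsEdge K e ∧ (e ∩ A).card = 1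

/-- Two cocycles are cohomologous: their sum (symmetric difference) is a coboundary. -/
def Cohomologous (K : SComplex V) (η η' : Finset (Finset V)) : Prop :=
  ∃ A : Finset V, symmDiff η η' = cobdryV K A

/-!
Every 1-cycle `γ` meets a coboundary `δ(A)` in an even number of edges: modulo 2 that number
is `∑ e ∈ γ, #(A ∩ e)`, which is the sum of the (even) degrees in `γ` of the vertices of `A`.
So if `δ(A)` is feasible for `ζ`, every cycle homologous to `ζ` meets it at least twice and
`δ(A)` minus any one edge is still feasible; and `δ(A)` is not empty, since `ζ` must meet it.
-/

section Parity

variable {α : Type*} [DecidableEq α]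

lemma sum_card_inter_eq_sum_degree (γ : Finset (Finset α)) (A : Finset α) :
    ∑ e ∈ γ, #(A ∩ e) = ∑ v ∈ A, #{e ∈ γ | v ∈ e} := by
  simp_rw [← filter_mem_eq_inter, card_eq_sum_ones, sum_filter]
  exact sum_comm

lemma even_card_filter_card_inter_eq_one {γ : Finset (Finset α)} (hcard : ∀ e ∈ γ, #e = 2)
    (hdeg : ∀ v, Even #{e ∈ γ | v ∈ e}) (A : Finset α) :
    Even #{e ∈ γ | #(A ∩ e) = 1} := by
  have hsum : Even (∑ e ∈ γ, #(A ∩ e)) := by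
    rw [sum_card_inter_eq_sum_degree]
    exact even_sum _ fun v _ => hdeg v
  have hrest : Even (∑ e ∈ γ with #(A ∩ e) ≠ 1, #(A ∩ e)) := by
    refine even_sum _ fun e he => ?_
    have hle : #(A ∩ e) ≤ 2 := (hcard e (mem_filter.1 he).1).symm ▸ card_le_card inter_subset_right
    have hne : #(A ∩ e) ≠ 1 := (mem_filter.1 he).2
    rw [Nat.even_iff]
    omega
  rw [← sum_filter_add_sum_filter_not γ (fun e => #(A ∩ e) = 1),
    sum_congr rfl fun e he => (mem_filter.1 he).2, sum_const, smul_eq_mul, mul_one,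
    Nat.even_add] at hsum
  exact hsum.2 hrest

end Parity

lemma IsOneCycle.even_card_inter_cobdryV {K : SComplex V} {γ : Finset (Finset V)}
    (hγ : IsOneCycle K γ) (A : Finset V) : Even #(γ ∩ cobdryV K A) := by
  have hcut : γ ∩ cobdryV K A = {e ∈ γ | #(A ∩ e) = 1} := by
    ext e
    simp only [cobdryV, mem_inter, mem_filter, mem_univ, true_and, inter_comm e A]
    exact ⟨fun ⟨he, _, h1⟩ => ⟨he, h1⟩, fun ⟨he, h1⟩ => ⟨he, hγ.1 e he, h1⟩⟩
  rw [hcut]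
  exact even_card_filter_card_inter_eq_one (fun e he => (hγ.1 e he).2) hγ.2 A

lemma Homol1.refl (K : SComplex V) (a : Finset (Finset V)) : Homol1 K a a :=
  ⟨∅, by simp, by simp [symmDiff_self, bdry]⟩

lemma not_feasible_empty {K : SComplex V} {ζ : Finset (Finset V)} (hζ : IsOneCycle K ζ) :
    ¬ Feasible K ζ ∅ := fun h => by
  simpa using h ζ hζ (Homol1.refl K ζ)

lemma Feasible.erase {K : SComplex V} {ζ S : Finset (Finset V)} (hS : Feasible K ζ S)
    (hpar : ∀ γ, IsOneCycle K γ → Even #(γ ∩ S)) (e : Finset V) :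
    Feasible K ζ (S.erase e) := by
  intro γ hγ hhom
  have hpos : 0 < #(γ ∩ S) := card_pos.2 (hS γ hγ hhom)
  have htwo : 2 ≤ #(γ ∩ S) := by
    obtain ⟨k, hk⟩ := hpar γ hγ
    omega
  rw [inter_erase, ← card_pos]
  have := pred_card_le_card_erase (s := γ ∩ S) (a := e)
  omega

theorem statement5_general (K : SComplex V)
    (ζ : Finset (Finset V)) (hζ : IsOneCycle K ζ)
    (A : Finset V) :
    ¬ (Feasible K ζ (cobdryV K A) ∧
        ∀ S', S' ⊂ cobdryV K A → ¬ Feasible K ζ S') := by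
  rintro ⟨hfeas, hmin⟩
  obtain ⟨e, he⟩ := nonempty_iff_ne_empty.2 fun h => not_feasible_empty hζ (h ▸ hfeas)
  exact hmin _ (erase_ssubset he) (hfeas.erase (fun γ hγ => hγ.even_card_inter_cobdryV A) e)

/-- Let `ζ` be a non-bounding 1-cycle of `K`.  No trivial cocycle is a
minimal solution set for `ζ`: if `η = δ(A)` is the coboundary of a set `A` of vertices,
then `η` is not an inclusion-minimal set of edges intersecting every cycle homologous
to `ζ`. -/
theorem statement5 (K : SComplex V) (hK : IsClosedSurface K)
    (ζ : Finset (Finset V)) (hζ : IsOneCycle K ζ) (hnb : ¬ IsBounding1 K ζ)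
    (A : Finset V) :
    ¬ (Feasible K ζ (cobdryV K A) ∧
        ∀ S', S' ⊂ cobdryV K A → ¬ Feasible K ζ S') :=
  statement5_general K ζ hζ A

end

end ArxivCut
end

section
/- If G contains a multicolored k-clique H = (V_H, E_H), then the set S = {V} ∪ {α_i^v : i ∈ [k], v ∈ V_i ∩ V_H} ∪ {β_{i,j}^{v,u} : {u,v} ∈ E_H with v ∈ V_i, u ∈ V_j} is a set of exactly C(k+1,2)+1 r-simplices of K(G) that intersects every r-cycle of K(G) homologous to ζ. -/
/-!
Index `S` by the sets `Z ⊆ H` with `|Z| ≤ 2`: the simplex of `Z` consists of the colors of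
`Z` and the graph vertices outside `Z`, so `Z = ∅, {v}, {v, u}` give `V`, `α^v`, `β^{v,u}`,
and `|S| = 1 + k + C(k,2) = C(k+1,2) + 1`.

Every `(r+1)`-simplex of `K(G)` has an even number of facets in `S`. A simplex `σ_i` or
`τ_{i,j}^v` consists of a set `I` of colors and the graph vertices outside a set `W`; the
members of `S` inside it are indexed by the interval `W ⊆ Z ⊆ H ∩ c⁻¹(I)`, which is empty
or has `2^m` elements with `m ≥ 1`, because `H` has exactly one vertex of each color. A cofacet
`μ_ℓ(ω)` contains no member of `S`, since its only facet avoiding `u_ℓ^ω` is the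
non-admissible `ω`. By double counting, `|∂b ∩ S|` is even for every `(r+1)`-chain `b`. But
if `z + ζ = ∂b` and `z` missed `S`, then `∂b ∩ S = ζ ∩ S = {V}`.
-/

namespace ArxivCut

noncomputable section

attribute [local instance] Classical.propDecidable

open Finset

variable {V : Type*} [Fintype V] [DecidableEq V]

/-- The simplicial complex generated by a set of (maximal) faces: all nonempty subsets of
the generators. -/
def closureOf (gens : Finset (Finset V)) : SComplex V where
  faces := Finset.univ.filter fun s => s.Nonempty ∧ ∃ t ∈ gens, s ⊆ t
  nonempty_mem := by
    intro s hs
    exact ((Finset.mem_filter.mp hs).2).1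
  down_closed := by
    intro s hs t hts ht
    rw [Finset.mem_filter] at hs ⊢
    obtain ⟨-, -, g, hg, hsg⟩ := hs
    exact ⟨Finset.mem_univ t, ht, g, hg, hts.trans hsg⟩

/-! ### The complex `K(G)` of the reduction from `k`-Multicolored Clique -/

variable (α : Type*) [Fintype α] [DecidableEq α] (k : ℕ)

/-- Base vertices: the vertices of the graph `G`, the `k` colors, and the dummy
vertex `d`. -/
abbrev BaseV := α ⊕ (Fin k ⊕ Unit)

/-- The vertices of `K(G)`: the base vertices together with the new vertices `u_ℓ^ω`
(indexed by a finset of base vertices and `ℓ ∈ [m]`, where `m = n³`, `n = |V|`). -/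
abbrev Vtx := BaseV α k ⊕ (Finset (BaseV α k) × Fin (Fintype.card α ^ 3))

/-- The vertex of `K(G)` corresponding to a graph vertex. -/
def vG (v : α) : Vtx α k := Sum.inl (Sum.inl v)

/-- The vertex of `K(G)` corresponding to a color. -/
def colV (i : Fin k) : Vtx α k := Sum.inl (Sum.inr (Sum.inl i))

/-- The dummy vertex `d`. -/
def dV : Vtx α k := Sum.inl (Sum.inr (Sum.inr ()))

/-- Retraction of a vertex of `K(G)` onto the base vertices (used only to index the new
vertices `u_ℓ^ω` by the simplex `ω`). -/
def retr : Vtx α k → BaseV α k := Sum.elim id fun _ => Sum.inr (Sum.inr ())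

/-- The new vertex `u_ℓ^ω` associated to the simplex `ω` and index `ℓ`. -/
def uV (ω : Finset (Vtx α k)) (ℓ : Fin (Fintype.card α ^ 3)) : Vtx α k :=
  Sum.inr (ω.image (retr α k), ℓ)

/-- The `r`-simplex `V` on the vertex set of `G` (where `r = |V| − 1`). -/
def VV : Finset (Vtx α k) := Finset.univ.image (vG α k)

/-- The `(r+1)`-simplex `σ_i = V ∪ {i}`. -/
def sigmaS (i : Fin k) : Finset (Vtx α k) := insert (colV α k i) (VV α k)

/-- The `(r+1)`-simplex `τ_{i,j}^v = (V ∖ {v}) ∪ {i, j}` with `i = c(v)`. -/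
def tauS (c : α → Fin k) (v : α) (j : Fin k) : Finset (Vtx α k) :=
  insert (colV α k (c v)) (insert (colV α k j) ((VV α k).erase (vG α k v)))

/-- The `r`-simplex `α_i^v = (V ∖ {v}) ∪ {i}` with `i = c(v)`. -/
def alphaS (c : α → Fin k) (v : α) : Finset (Vtx α k) :=
  insert (colV α k (c v)) ((VV α k).erase (vG α k v))

/-- The `r`-simplex `β_{i,j}^{v,u} = (V ∖ {v,u}) ∪ {i, j}` with `i = c(v)`, `j = c(u)`. -/
def betaS (c : α → Fin k) (v u : α) : Finset (Vtx α k) :=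
  insert (colV α k (c v))
    (insert (colV α k (c u)) (((VV α k).erase (vG α k v)).erase (vG α k u)))

/-- The `(r+1)`-simplex `μ_ℓ(ω) = ω ∪ {u_ℓ^ω}`. -/
def muS (ω : Finset (Vtx α k)) (ℓ : Fin (Fintype.card α ^ 3)) : Finset (Vtx α k) :=
  insert (uV α k ω ℓ) ω

/-- The input cycle `ζ = V + Σ_{u ∈ V} (V ∖ {u}) ∪ {d}` as a set of `r`-simplices. -/
def zetaC : Finset (Finset (Vtx α k)) :=
  insert (VV α k)
    (Finset.univ.image fun u : α => insert (dV α k) ((VV α k).erase (vG α k u)))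

/-- The admissible `r`-simplices of `K(G)`: `V`, the `α_i^v` (`v ∈ V_i`), and the
`β_{i,j}^{v,u}` (`v ∈ V_i`, `u ∈ V_j`, `{u,v} ∈ E`; the condition `i ≠ j` follows from the
coloring being proper). -/
def Adm (G : SimpleGraph α) (c : α → Fin k) (s : Finset (Vtx α k)) : Prop :=
  s = VV α k ∨ (∃ v : α, s = alphaS α k c v) ∨
    ∃ v u : α, G.Adj v u ∧ s = betaS α k c v u

/-- The big `(r+1)`-simplices of `K(G)`: the `σ_i` and the `τ_{i,j}^v` (`j ≠ i = c(v)`). -/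
def bigS (c : α → Fin k) : Finset (Finset (Vtx α k)) :=
  (Finset.univ.image fun i : Fin k => sigmaS α k i) ∪
    ((Finset.univ (α := α × Fin k)).filter fun p => p.2 ≠ c p.1).image
      fun p => tauS α k c p.1 p.2

/-- The undesirable `r`-simplices: the non-admissible facets of the `σ_i` and of the
`τ_{i,j}^v`. -/
def Undes (G : SimpleGraph α) (c : α → Fin k) (s : Finset (Vtx α k)) : Prop :=
  ¬ Adm α k G c s ∧ ∃ t ∈ bigS α k c, s ⊆ t ∧ s.card + 1 = t.card

/-- The inadmissible `r`-simplices: the facets of the cofacets `μ_ℓ(ω)` of the undesirable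
simplices `ω` (in particular every undesirable simplex is inadmissible). -/
def Inadm (G : SimpleGraph α) (c : α → Fin k) (s : Finset (Vtx α k)) : Prop :=
  ∃ ω ℓ, Undes α k G c ω ∧ s ⊆ muS α k ω ℓ ∧ s.card + 1 = (muS α k ω ℓ).card

/-- The generating (maximal) faces of `K(G)`. -/
def gens (G : SimpleGraph α) (c : α → Fin k) : Finset (Finset (Vtx α k)) :=
  zetaC α k ∪ bigS α k c ∪
    ((Finset.univ (α := Finset (Vtx α k))).filter fun ω => Undes α k G c ω).biUnion
      fun ω => Finset.univ.image fun ℓ : Fin (Fintype.card α ^ 3) => muS α k ω ℓ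

/-- The complex `K(G)` of the reduction. -/
def KG (G : SimpleGraph α) (c : α → Fin k) : SComplex (Vtx α k) :=
  closureOf (gens α k G c)

variable {α k}

def simplexOf (I : Finset (Fin k)) (W : Finset α) : Finset (Vtx α k) :=
  I.image (colV α k) ∪ Wᶜ.image (vG α k)

lemma mem_simplexOf {I : Finset (Fin k)} {W : Finset α} {x : Vtx α k} :
    x ∈ simplexOf I W ↔ (∃ i ∈ I, colV α k i = x) ∨ ∃ v ∉ W, vG α k v = x := by
  simp [simplexOf]

@[simp]
lemma colV_mem_simplexOf {I : Finset (Fin k)} {W : Finset α} {i : Fin k} :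
    colV α k i ∈ simplexOf I W ↔ i ∈ I := by
  simp [mem_simplexOf, colV, vG]

@[simp]
lemma vG_mem_simplexOf {I : Finset (Fin k)} {W : Finset α} {v : α} :
    vG α k v ∈ simplexOf I W ↔ v ∉ W := by
  simp [mem_simplexOf, colV, vG]

lemma simplexOf_subset_simplexOf_iff {I I' : Finset (Fin k)} {W W' : Finset α} :
    simplexOf I W ⊆ simplexOf I' W' ↔ I ⊆ I' ∧ W' ⊆ W := by
  constructor
  · intro h
    refine ⟨fun i hi => ?_, fun v hv => ?_⟩
    · simpa using h (colV_mem_simplexOf.2 hi)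
    · by_contra hvW
      exact vG_mem_simplexOf.1 (h (vG_mem_simplexOf.2 hvW)) hv
  · rintro ⟨hI, hW⟩ x hx
    rcases mem_simplexOf.1 hx with ⟨i, hi, rfl⟩ | ⟨v, hv, rfl⟩
    · exact colV_mem_simplexOf.2 (hI hi)
    · exact vG_mem_simplexOf.2 fun h => hv (hW h)

lemma card_simplexOf (I : Finset (Fin k)) (W : Finset α) :
    (simplexOf I W).card = I.card + (Fintype.card α - W.card) := by
  rw [simplexOf, card_union_of_disjoint,
    card_image_of_injective _ fun _ _ h => by simpa [colV] using h,
    card_image_of_injective _ fun _ _ h => by simpa [vG] using h, card_compl]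
  simp [disjoint_left, colV, vG]

lemma uV_notMem_simplexOf (I : Finset (Fin k)) (W : Finset α) (ω : Finset (Vtx α k))
    (ℓ : Fin (Fintype.card α ^ 3)) : uV α k ω ℓ ∉ simplexOf I W := by
  simp [mem_simplexOf, uV, colV, vG]

lemma insert_colV_simplexOf (i : Fin k) (I : Finset (Fin k)) (W : Finset α) :
    insert (colV α k i) (simplexOf I W) = simplexOf (insert i I) W := by
  ext x; simp [mem_simplexOf, or_assoc, @eq_comm _ x]

lemma erase_vG_simplexOf (v : α) (I : Finset (Fin k)) (W : Finset α) :
    (simplexOf I W).erase (vG α k v) = simplexOf I (insert v W) := by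
  ext x
  simp only [mem_erase, mem_simplexOf, mem_insert, not_or]
  aesop (add simp [colV, vG])

lemma VV_eq_simplexOf : VV α k = simplexOf ∅ ∅ := by
  ext x; simp [VV, mem_simplexOf, eq_comm]

lemma sigmaS_eq_simplexOf (i : Fin k) : sigmaS α k i = simplexOf {i} ∅ := by
  rw [sigmaS, VV_eq_simplexOf, insert_colV_simplexOf]; rfl

lemma tauS_eq_simplexOf (c : α → Fin k) (v : α) (j : Fin k) :
    tauS α k c v j = simplexOf {c v, j} {v} := by
  rw [tauS, VV_eq_simplexOf, erase_vG_simplexOf, insert_colV_simplexOf, insert_colV_simplexOf]; rfl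

lemma alphaS_eq_simplexOf (c : α → Fin k) (v : α) : alphaS α k c v = simplexOf {c v} {v} := by
  rw [alphaS, VV_eq_simplexOf, erase_vG_simplexOf, insert_colV_simplexOf]; rfl

lemma betaS_eq_simplexOf (c : α → Fin k) (v u : α) :
    betaS α k c v u = simplexOf {c v, c u} {v, u} := by
  rw [betaS, VV_eq_simplexOf, erase_vG_simplexOf, erase_vG_simplexOf, insert_colV_simplexOf,
    insert_colV_simplexOf, insert_comm u]; rfl

lemma dV_notMem_simplexOf (I : Finset (Fin k)) (W : Finset α) : dV α k ∉ simplexOf I W := by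
  simp [mem_simplexOf, dV, colV, vG]

lemma mem_KG_faces {G : SimpleGraph α} {c : α → Fin k} {s : Finset (Vtx α k)} :
    s ∈ (KG α k G c).faces ↔ s.Nonempty ∧ ∃ t ∈ gens α k G c, s ⊆ t := by
  simp [KG, closureOf]

lemma mem_bigS {c : α → Fin k} {t : Finset (Vtx α k)} :
    t ∈ bigS α k c ↔
      (∃ i, t = simplexOf {i} ∅) ∨ ∃ v j, j ≠ c v ∧ t = simplexOf {c v, j} {v} := by
  simp [bigS, sigmaS_eq_simplexOf, tauS_eq_simplexOf, eq_comm]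

lemma card_of_mem_bigS {c : α → Fin k} {t : Finset (Vtx α k)} (ht : t ∈ bigS α k c) :
    t.card = Fintype.card α + 1 := by
  rcases mem_bigS.1 ht with ⟨i, rfl⟩ | ⟨v, j, hj, rfl⟩
  · simp [card_simplexOf, add_comm]
  · have : 0 < Fintype.card α := Fintype.card_pos_iff.2 ⟨v⟩
    rw [card_simplexOf, card_pair hj.symm, card_singleton]
    omega

lemma card_le_of_mem_zetaC {t : Finset (Vtx α k)} (ht : t ∈ zetaC α k) :
    t.card ≤ Fintype.card α := by
  simp only [zetaC, mem_insert, mem_image, mem_univ, true_and] at ht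
  rcases ht with rfl | ⟨u, rfl⟩
  · simp [VV_eq_simplexOf, card_simplexOf]
  · rw [VV_eq_simplexOf, erase_vG_simplexOf]
    refine (card_insert_le _ _).trans ?_
    simp [card_simplexOf, Fintype.card_pos_iff.2 ⟨u⟩]

lemma card_of_undes {G : SimpleGraph α} {c : α → Fin k} {ω : Finset (Vtx α k)}
    (hω : Undes α k G c ω) : ω.card = Fintype.card α := by
  obtain ⟨-, t, ht, -, hcard⟩ := hω
  have := card_of_mem_bigS ht
  omega

lemma mem_bigS_or_eq_muS {G : SimpleGraph α} {c : α → Fin k} {σ : Finset (Vtx α k)}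
    (hσ : σ ∈ (KG α k G c).faces) (hcard : σ.card = Fintype.card α + 1) :
    σ ∈ bigS α k c ∨ ∃ ω ℓ, Undes α k G c ω ∧ σ = muS α k ω ℓ := by
  obtain ⟨-, t, ht, hσt⟩ := mem_KG_faces.1 hσ
  simp only [gens, mem_union, mem_biUnion, mem_filter, mem_univ, true_and, mem_image] at ht
  rcases ht with (ht | ht) | ⟨ω, hω, ℓ, rfl⟩
  · have := (card_le_card hσt).trans (card_le_of_mem_zetaC ht)
    omega
  · rw [eq_of_subset_of_card_le hσt (by rw [hcard, card_of_mem_bigS ht])]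
    exact Or.inl ht
  · refine Or.inr ⟨ω, ℓ, hω, eq_of_subset_of_card_le hσt ?_⟩
    rw [hcard, ← card_of_undes hω]
    exact card_insert_le _ _

lemma exists_gens_superset_of_adm {G : SimpleGraph α} {c : α → Fin k}
    (hcol : ∀ u v : α, G.Adj u v → c u ≠ c v) {s : Finset (Vtx α k)} (hs : Adm α k G c s) :
    ∃ t ∈ gens α k G c, s ⊆ t := by
  have mem_gens : ∀ t ∈ bigS α k c, t ∈ gens α k G c := fun t ht =>
    mem_union_left _ (mem_union_right _ ht)
  rcases hs with rfl | ⟨v, rfl⟩ | ⟨v, u, hvu, rfl⟩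
  · exact ⟨VV α k, mem_union_left _ (mem_union_left _ (mem_insert_self _ _)), subset_rfl⟩
  · refine ⟨_, mem_gens _ (mem_bigS.2 (Or.inl ⟨c v, rfl⟩)), ?_⟩
    simp [alphaS_eq_simplexOf, simplexOf_subset_simplexOf_iff]
  · refine ⟨_, mem_gens _ (mem_bigS.2 (Or.inr ⟨v, c u, (hcol v u hvu).symm, rfl⟩)), ?_⟩
    simp [betaS_eq_simplexOf, simplexOf_subset_simplexOf_iff]

lemma not_subset_muS {G : SimpleGraph α} {c : α → Fin k} {ω : Finset (Vtx α k)}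
    (hω : Undes α k G c ω) (ℓ : Fin (Fintype.card α ^ 3)) {I : Finset (Fin k)} {W : Finset α}
    (hadm : Adm α k G c (simplexOf I W)) (hcard : (simplexOf I W).card = Fintype.card α) :
    ¬ simplexOf I W ⊆ muS α k ω ℓ := by
  intro h
  have hsω : simplexOf I W ⊆ ω := fun x hx =>
    (mem_insert.1 (h hx)).resolve_left fun hxu => uV_notMem_simplexOf I W ω ℓ (hxu ▸ hx)
  have := eq_of_subset_of_card_le hsω (by rw [hcard, card_of_undes hω])
  exact hω.1 (this ▸ hadm)

def cliqueSimplex (c : α → Fin k) (Z : Finset α) : Finset (Vtx α k) :=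
  simplexOf (Z.image c) Z

@[simp]
lemma cliqueSimplex_empty (c : α → Fin k) : cliqueSimplex c ∅ = VV α k := by
  simp [cliqueSimplex, VV_eq_simplexOf]

lemma cliqueSimplex_injective (c : α → Fin k) : Function.Injective (cliqueSimplex c) :=
  fun _ _ h => le_antisymm (simplexOf_subset_simplexOf_iff.1 h.ge).2
    (simplexOf_subset_simplexOf_iff.1 h.le).2

lemma card_cliqueSimplex {c : α → Fin k} {H Z : Finset α} (hc : Set.InjOn c H) (hZ : Z ⊆ H) :
    (cliqueSimplex c Z).card = Fintype.card α := by
  rw [cliqueSimplex, card_simplexOf, card_image_of_injOn (hc.mono (coe_subset.2 hZ))]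
  have := card_le_univ Z
  omega

lemma insert_VV_union_eq_image_cliqueSimplex {G : SimpleGraph α} {c : α → Fin k} {H : Finset α}
    (hadj : ∀ u ∈ H, ∀ v ∈ H, u ≠ v → G.Adj u v) :
    insert (VV α k) ((H.image fun v => alphaS α k c v) ∪
      ((H ×ˢ H).filter fun p => G.Adj p.1 p.2).image fun p => betaS α k c p.1 p.2) =
      (H.powerset.filter (·.card ≤ 2)).image (cliqueSimplex c) := by
  ext s
  simp only [mem_insert, mem_union, mem_image, mem_filter, mem_product, mem_powerset,
    Prod.exists]
  constructor
  · rintro (rfl | ⟨v, hv, rfl⟩ | ⟨v, u, ⟨⟨hv, hu⟩, -⟩, rfl⟩)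
    · exact ⟨∅, by simp⟩
    · exact ⟨{v}, by simp [hv, cliqueSimplex, alphaS_eq_simplexOf]⟩
    · exact ⟨{v, u}, ⟨insert_subset hv (singleton_subset_iff.2 hu), card_le_two⟩,
        by simp [cliqueSimplex, betaS_eq_simplexOf]⟩
  · rintro ⟨Z, ⟨hZH, hZ⟩, rfl⟩
    obtain h | h | h : Z.card = 0 ∨ Z.card = 1 ∨ Z.card = 2 := by omega
    · obtain rfl := card_eq_zero.1 h
      simp
    · obtain ⟨v, rfl⟩ := card_eq_one.1 h
      refine Or.inr (Or.inl ⟨v, by simpa using hZH, ?_⟩)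
      simp [cliqueSimplex, alphaS_eq_simplexOf]
    · obtain ⟨v, u, hvu, rfl⟩ := card_eq_two.1 h
      have hv : v ∈ H := hZH (mem_insert_self _ _)
      have hu : u ∈ H := hZH (mem_insert_of_mem (mem_singleton_self _))
      exact Or.inr (Or.inr ⟨v, u, ⟨⟨hv, hu⟩, hadj v hv u hu hvu⟩,
        by simp [cliqueSimplex, betaS_eq_simplexOf]⟩)

lemma adm_of_mem_insert_VV_union {G : SimpleGraph α} {c : α → Fin k} {H : Finset α}
    {s : Finset (Vtx α k)} (hs : s ∈ insert (VV α k) ((H.image fun v => alphaS α k c v) ∪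
      ((H ×ˢ H).filter fun p => G.Adj p.1 p.2).image fun p => betaS α k c p.1 p.2)) :
    Adm α k G c s := by
  simp only [mem_insert, mem_union, mem_image, mem_filter, Prod.exists] at hs
  rcases hs with rfl | ⟨v, -, rfl⟩ | ⟨v, u, ⟨-, hvu⟩, rfl⟩
  exacts [Or.inl rfl, Or.inr (Or.inl ⟨v, rfl⟩), Or.inr (Or.inr ⟨v, u, hvu, rfl⟩)]

lemma mem_zetaC_iff_of_mem_image_cliqueSimplex (c : α → Fin k) (P : Finset (Finset α)) :
    ∀ τ ∈ P.image (cliqueSimplex c), τ ∈ zetaC α k ↔ τ = VV α k := by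
  simp only [forall_mem_image]
  intro Z _
  simp only [zetaC, mem_insert, mem_image, mem_univ, true_and, or_iff_left_iff_imp]
  rintro ⟨u, hu⟩
  exact absurd (hu ▸ mem_insert_self _ _) (dV_notMem_simplexOf _ _)

lemma card_powerset_filter_card_le_two {β : Type*} [DecidableEq β] (s : Finset β) :
    (s.powerset.filter (·.card ≤ 2)).card = (s.card + 1).choose 2 + 1 := by
  have hsplit : s.powerset.filter (·.card ≤ 2) =
      (s.powersetCard 0 ∪ s.powersetCard 1) ∪ s.powersetCard 2 := by
    ext Z
    simp only [mem_filter, mem_powerset, mem_union, mem_powersetCard, ← and_or_left]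
    exact and_congr_right fun _ => by omega
  rw [hsplit, card_union_of_disjoint, card_union_of_disjoint]
  · simp [card_powersetCard, Nat.choose_succ_succ']
    ring
  all_goals
    simp only [disjoint_left, mem_union, mem_powersetCard]
    omega

lemma even_card_Icc_finset_of_ne {β : Type*} [DecidableEq β] {W T : Finset β} (h : W ≠ T) :
    Even (Icc W T).card := by
  by_cases hWT : W ⊆ T
  · rw [card_Icc_finset hWT, Nat.even_pow]
    have := card_lt_card (ssubset_of_subset_of_ne hWT h)
    exact ⟨even_two, by omega⟩
  · simp [Icc_eq_empty hWT]

lemma filter_cliqueSimplex_subset_simplexOf {c : α → Fin k} {H : Finset α}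
    (hc : Set.InjOn c H) {I : Finset (Fin k)} (hI : I.card ≤ 2) (W : Finset α) :
    (H.powerset.filter (·.card ≤ 2)).filter (cliqueSimplex c · ⊆ simplexOf I W) =
      Icc W (H.filter (c · ∈ I)) := by
  ext Z
  simp only [mem_filter, mem_powerset, mem_Icc, cliqueSimplex, simplexOf_subset_simplexOf_iff,
    image_subset_iff, subset_iff (s₂ := H.filter _), mem_filter]
  constructor
  · rintro ⟨⟨hZH, -⟩, hZI, hWZ⟩
    exact ⟨hWZ, fun v hv => ⟨hZH hv, hZI v hv⟩⟩
  · rintro ⟨hWZ, hZ⟩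
    have hZH : Z ⊆ H := fun v hv => (hZ hv).1
    have hZI : Z.card ≤ I.card :=
      card_le_card_of_injOn c (fun v hv => (hZ hv).2) (hc.mono (coe_subset.2 hZH))
    exact ⟨⟨hZH, hZI.trans hI⟩, fun v hv => (hZ hv).2, hWZ⟩

lemma even_card_facets_image_cliqueSimplex {G : SimpleGraph α} {c : α → Fin k} {H : Finset α}
    (hinj : Set.InjOn c H) (hsurj : ∀ i, ∃ u ∈ H, c u = i)
    (hadm : ∀ Z ∈ H.powerset.filter (·.card ≤ 2), Adm α k G c (cliqueSimplex c Z))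
    {σ : Finset (Vtx α k)} (hσ : σ ∈ (KG α k G c).faces)
    (hcard : σ.card = Fintype.card α + 1) :
    Even (((H.powerset.filter (·.card ≤ 2)).image (cliqueSimplex c)).filter
      fun τ => τ ⊆ σ ∧ τ.card + 1 = σ.card).card := by
  have hcardZ : ∀ Z ∈ H.powerset.filter (·.card ≤ 2),
      (cliqueSimplex c Z).card = Fintype.card α :=
    fun Z hZ => card_cliqueSimplex hinj (mem_powerset.1 (mem_filter.1 hZ).1)
  rw [filter_image, card_image_of_injective _ (cliqueSimplex_injective c),
    filter_congr (q := (cliqueSimplex c · ⊆ σ)) fun Z hZ => by simp [hcardZ Z hZ, hcard]]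
  rcases mem_bigS_or_eq_muS hσ hcard with hbig | ⟨ω, ℓ, hω, rfl⟩
  · rcases mem_bigS.1 hbig with ⟨i, rfl⟩ | ⟨v, j, hj, rfl⟩
    · rw [filter_cliqueSimplex_subset_simplexOf hinj (by simp)]
      obtain ⟨u, hu, rfl⟩ := hsurj i
      refine even_card_Icc_finset_of_ne fun h => ?_
      have : u ∈ (∅ : Finset α) := h ▸ mem_filter.2 ⟨hu, mem_singleton_self _⟩
      simp at this
    · rw [filter_cliqueSimplex_subset_simplexOf hinj card_le_two]
      obtain ⟨u, hu, rfl⟩ := hsurj j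
      refine even_card_Icc_finset_of_ne fun h => ?_
      have : u ∈ ({v} : Finset α) := h ▸ mem_filter.2 ⟨hu, by simp⟩
      exact hj (by rw [mem_singleton.1 this])
  · have hnone : ∀ Z ∈ H.powerset.filter (·.card ≤ 2),
        ¬ cliqueSimplex c Z ⊆ muS α k ω ℓ :=
      fun Z hZ => not_subset_muS hω ℓ (hadm Z hZ) (hcardZ Z hZ)
    simp [filter_false_of_mem hnone]

lemma even_card_filter_mem_bdry {X : Type*} [Fintype X] [DecidableEq X]
    (b S : Finset (Finset X))
    (h : ∀ σ ∈ b, Even (S.filter fun τ => τ ⊆ σ ∧ τ.card + 1 = σ.card).card) :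
    Even (S.filter (· ∈ bdry b)).card := by
  have hbdry : S.filter (· ∈ bdry b) =
      S.filter fun τ => Odd (b.filter fun σ => τ ⊆ σ ∧ τ.card + 1 = σ.card).card := by
    ext τ
    simp [bdry]
  rw [hbdry, ← even_sum_iff_even_card_odd]
  have hcount := sum_card_bipartiteAbove_eq_sum_card_bipartiteBelow (s := S) (t := b)
    (r := fun τ σ => τ ⊆ σ ∧ τ.card + 1 = σ.card)
  simp only [bipartiteAbove, bipartiteBelow] at hcount
  rw [hcount]
  exact even_sum _ h

lemma exists_mem_of_bdry_eq_symmDiff {X : Type*} [Fintype X] [DecidableEq X]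
    {b S z ζ : Finset (Finset X)} {w : Finset X} (hbz : bdry b = symmDiff z ζ)
    (hζ : ∀ τ ∈ S, τ ∈ ζ ↔ τ = w) (hw : w ∈ S)
    (h : ∀ σ ∈ b, Even (S.filter fun τ => τ ⊆ σ ∧ τ.card + 1 = σ.card).card) :
    ∃ s ∈ S, s ∈ z := by
  by_contra! hz
  have hbdry : S.filter (· ∈ bdry b) = {w} := by
    ext τ
    simp only [hbz, mem_filter, mem_symmDiff, mem_singleton]
    constructor
    · rintro ⟨hτ, ⟨hτz, -⟩ | ⟨hτζ, -⟩⟩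
      exacts [absurd hτz (hz τ hτ), (hζ τ hτ).1 hτζ]
    · intro hτw
      rw [hτw]
      exact ⟨hw, Or.inr ⟨(hζ w hw).2 rfl, hz w hw⟩⟩
  have heven := even_card_filter_mem_bdry b S h
  rw [hbdry, card_singleton] at heven
  exact Nat.not_even_one heven

lemma injOn_of_card_filter_eq_one {β γ : Type*} [DecidableEq γ] {c : β → γ} {H : Finset β}
    (hcolor : ∀ i, (H.filter fun v => c v = i).card = 1) : Set.InjOn c H := by
  intro u hu v hv huv
  obtain ⟨w, hw⟩ := card_eq_one.1 (hcolor (c v))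
  have hu' : u ∈ H.filter fun x => c x = c v := mem_filter.2 ⟨hu, huv⟩
  have hv' : v ∈ H.filter fun x => c x = c v := mem_filter.2 ⟨hv, rfl⟩
  rw [hw, mem_singleton] at hu' hv'
  rw [hu', hv']

lemma card_eq_of_card_filter_eq_one {β γ : Type*} [Fintype γ] [DecidableEq γ] {c : β → γ}
    {H : Finset β} (hcolor : ∀ i, (H.filter fun v => c v = i).card = 1) :
    H.card = Fintype.card γ := by
  rw [card_eq_sum_card_fiberwise fun v _ => mem_univ (c v)]
  simp [hcolor]

/-- If `G` contains a multicolored `k`-clique `H`, then the set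
`S = {V} ∪ {α_i^v : v ∈ V_i ∩ V_H} ∪ {β_{i,j}^{v,u} : {u,v} ∈ E_H}` is a set of exactly
`C(k+1,2) + 1` many `r`-simplices of `K(G)` intersecting every `r`-cycle of `K(G)`
homologous to `ζ`. -/
theorem statement13 (G : SimpleGraph α) (c : α → Fin k)
    (hcol : ∀ u v : α, G.Adj u v → c u ≠ c v)
    (hm : Nat.choose (k + 1) 2 + 1 < Fintype.card α ^ 3)
    (H : Finset α)
    (hadj : ∀ u ∈ H, ∀ v ∈ H, u ≠ v → G.Adj u v)
    (hcolor : ∀ i : Fin k, (H.filter fun v => c v = i).card = 1)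
    (S : Finset (Finset (Vtx α k)))
    (hSdef : S = insert (VV α k)
      ((H.image fun v => alphaS α k c v) ∪
        ((H ×ˢ H).filter fun p => G.Adj p.1 p.2).image fun p => betaS α k c p.1 p.2)) :
    S.card = Nat.choose (k + 1) 2 + 1 ∧
    (∀ s ∈ S, s ∈ (KG α k G c).faces ∧ s.card = (Fintype.card α - 1) + 1) ∧
    ∀ z, IsRCycle (KG α k G c) (Fintype.card α - 1) z →
      Homologous (KG α k G c) (Fintype.card α - 1) z (zetaC α k) →
      ∃ s ∈ S, s ∈ z := by
  have hn : 0 < Fintype.card α := Nat.pos_of_ne_zero fun h => by simp [h] at hm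
  have hinj := injOn_of_card_filter_eq_one hcolor
  have hsurj : ∀ i, ∃ u ∈ H, c u = i := fun i => by
    simpa [Finset.Nonempty] using card_pos.1 (hcolor i).ge
  set P := H.powerset.filter (·.card ≤ 2)
  have hSP : S = P.image (cliqueSimplex c) :=
    hSdef.trans (insert_VV_union_eq_image_cliqueSimplex hadj)
  have hadm : ∀ Z ∈ P, Adm α k G c (cliqueSimplex c Z) := fun Z hZ =>
    adm_of_mem_insert_VV_union (hSdef ▸ hSP ▸ mem_image_of_mem _ hZ)
  rw [hSP]
  refine ⟨?_, ?_, ?_⟩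
  · rw [card_image_of_injective _ (cliqueSimplex_injective c), card_powerset_filter_card_le_two,
      card_eq_of_card_filter_eq_one hcolor, Fintype.card_fin]
  · simp only [forall_mem_image]
    intro Z hZ
    have hcard := card_cliqueSimplex hinj (mem_powerset.1 (mem_filter.1 hZ).1)
    have hface := exists_gens_superset_of_adm hcol (hadm Z hZ)
    exact ⟨mem_KG_faces.2 ⟨card_pos.1 (by omega), hface⟩, by omega⟩
  · rintro z - ⟨b, hb, hbz⟩
    refine exists_mem_of_bdry_eq_symmDiff hbz (mem_zetaC_iff_of_mem_image_cliqueSimplex c P)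
      (mem_image.2 ⟨∅, by simp [P], cliqueSimplex_empty c⟩) fun σ hσ => ?_
    have hcard : σ.card = Fintype.card α + 1 := by have := (hb σ hσ).2; omega
    exact even_card_facets_image_cliqueSimplex hinj hsurj hadm (hb σ hσ).1 hcard

end

end ArxivCut
end
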